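/- arXiv:2009.04148 — 6 statements merged into one kernel-verified Lean document; each statement's English description precedes it below -/
import Mathlib

section
/- Let K be a positive integer, let g ∈ ℂ^K satisfy |g_k| = 1/√(2K) for all 1 ≤ k ≤ K, let ε ∈ {1, −1}, and set g' = ε i g. Then for every (e_1, e_2) ∈ {−2, 0, 2}² with (e_1, e_2) ≠ (0, 0): (i) every entry of e_1 g + e_2 g' has modulus √(e_1² + e_2²)/√(2K); (ii) ‖e_1 g + e_2 g'‖² = (e_1² + e_2²)/2; and (iii) ∏_{k=1}^K |e_1 g_k + e_2 g'_k|² = ( ‖e_1 g + e_2 g'‖² / K )^K, i.e., the arithmetic–geometric-mean upper bound on the squared product distance is attained with equality. -/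
open Finset

/-- For a unimodular vector `g` with entries of modulus `1/√(2K)` and
`g' = ε i g` (`ε = ±1`), every nonzero single-user error pattern
`e₁ g + e₂ g'` with `e₁, e₂ ∈ {-2, 0, 2}` has: (i) entries of modulus
`√(e₁² + e₂²)/√(2K)`; (ii) squared norm `(e₁² + e₂²)/2`; and (iii) squared
product distance attaining the AM–GM upper bound with equality. -/
theorem stmt_3 (K : ℕ) (hK : 0 < K) (g : Fin K → ℂ)
    (hg : ∀ k, ‖g k‖ = 1 / Real.sqrt (2 * K))
    (ε : ℝ) (hε : ε = 1 ∨ ε = -1)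
    (g' : Fin K → ℂ) (hg' : g' = fun k => (ε : ℂ) * Complex.I * g k)
    (e₁ e₂ : ℝ) (he₁ : e₁ ∈ ({-2, 0, 2} : Set ℝ)) (he₂ : e₂ ∈ ({-2, 0, 2} : Set ℝ))
    (hne : ¬(e₁ = 0 ∧ e₂ = 0)) :
    (∀ k, ‖(e₁ : ℂ) * g k + (e₂ : ℂ) * g' k‖
        = Real.sqrt (e₁ ^ 2 + e₂ ^ 2) / Real.sqrt (2 * K)) ∧
    ((∑ k, ‖(e₁ : ℂ) * g k + (e₂ : ℂ) * g' k‖ ^ 2)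
        = (e₁ ^ 2 + e₂ ^ 2) / 2) ∧
    ((∏ k, ‖(e₁ : ℂ) * g k + (e₂ : ℂ) * g' k‖ ^ 2)
        = ((∑ k, ‖(e₁ : ℂ) * g k + (e₂ : ℂ) * g' k‖ ^ 2) / (K : ℝ)) ^ K) := by
  have hε2 : ε ^ 2 = 1 := by rcases hε with h | h <;> simp [h]
  have hKpos : (0 : ℝ) < 2 * K := by positivity
  have habs : ∀ k, ‖(e₁ : ℂ) * g k + (e₂ : ℂ) * g' k‖
      = Real.sqrt (e₁ ^ 2 + e₂ ^ 2) / Real.sqrt (2 * K) := by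
    intro k
    have h1 : (e₁ : ℂ) * g k + (e₂ : ℂ) * g' k
        = ((e₁ : ℂ) + (↑(e₂ * ε)) * Complex.I) * g k := by
      rw [hg']; push_cast; ring
    rw [h1, norm_mul, Complex.norm_add_mul_I, hg k]
    have : e₁ ^ 2 + (e₂ * ε) ^ 2 = e₁ ^ 2 + e₂ ^ 2 := by
      rw [mul_pow, hε2, mul_one]
    rw [this]; field_simp
  have hsq : ∀ k, ‖(e₁ : ℂ) * g k + (e₂ : ℂ) * g' k‖ ^ 2
      = (e₁ ^ 2 + e₂ ^ 2) / (2 * K) := by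
    intro k
    rw [habs k, div_pow, Real.sq_sqrt (by positivity), Real.sq_sqrt hKpos.le]
  have hsum : (∑ k, ‖(e₁ : ℂ) * g k + (e₂ : ℂ) * g' k‖ ^ 2)
      = (e₁ ^ 2 + e₂ ^ 2) / 2 := by
    rw [Finset.sum_congr rfl fun k _ => hsq k, Finset.sum_const, card_univ,
      Fintype.card_fin, nsmul_eq_mul]
    field_simp
  refine ⟨habs, hsum, ?_⟩
  rw [Finset.prod_congr rfl fun k _ => hsq k, Finset.prod_const, card_univ,
    Fintype.card_fin, hsum]
  congr 1
  field_simp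
end

section
/- Let K and J be positive integers, P > 0, and for each user j ∈ {1, …, J} let s_j ∈ ℂ^K satisfy |s_{j,k}| = 1/√K for all k (unimodular spreading sequences), with uniform power allocation P_j = P/J. For symbols μ_j, μ̂_j ∈ ℂ set τ_{j,k} = √(P/J) · s_{j,k} (μ_j − μ̂_j). Then ∏_{k=1}^K ( ∑_{j=1}^J |τ_{j,k}|² ) = (1/K^K) · ( ∑_{j=1}^J ∑_{k=1}^K |τ_{j,k}|² )^K; that is, for every pair of transmit matrices the squared product distance attains its arithmetic–geometric-mean upper bound with equality, and it is strictly positive whenever μ_j ≠ μ̂_j for at least one j. -/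
open Finset

/-- Core of Theorem 1: with unimodular spreading sequences (entries of modulus
`1/√K`) and uniform power allocation `P/J`, the squared product distance of
every pair of transmit matrices attains its AM–GM upper bound with equality,
and it is strictly positive whenever some user's symbols differ. -/
theorem stmt_4 (K J : ℕ) (hK : 0 < K) (hJ : 0 < J) (P : ℝ) (hP : 0 < P)
    (s : Fin J → Fin K → ℂ) (hs : ∀ j k, ‖s j k‖ = 1 / Real.sqrt K)
    (μ μ' : Fin J → ℂ)
    (τ : Fin J → Fin K → ℂ)
    (hτ : ∀ j k, τ j k = (Real.sqrt (P / J) : ℂ) * s j k * (μ j - μ' j)) :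
    ((∏ k, ∑ j, ‖τ j k‖ ^ 2)
        = (1 / (K : ℝ) ^ K) * (∑ j, ∑ k, ‖τ j k‖ ^ 2) ^ K) ∧
    ((∃ j, μ j ≠ μ' j) → 0 < ∏ k, ∑ j, ‖τ j k‖ ^ 2) := by
  have hKpos : (0:ℝ) < (K:ℝ) := by exact_mod_cast hK
  have hPJ : (0:ℝ) < P / J := by positivity
  have habs : ∀ j k, ‖τ j k‖ ^ 2 = (P / J) * ‖μ j - μ' j‖ ^ 2 / K := by
    intro j k
    rw [hτ, norm_mul, norm_mul, hs, Complex.norm_real, Real.norm_eq_abs,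
      abs_of_nonneg (Real.sqrt_nonneg _)]
    rw [mul_pow, mul_pow, Real.sq_sqrt hPJ.le, div_pow, one_pow,
      Real.sq_sqrt hKpos.le]
    ring
  set A : ℝ := ∑ j, (P / J) * ‖μ j - μ' j‖ ^ 2 with hA
  have hsum : ∀ k : Fin K, (∑ j, ‖τ j k‖ ^ 2) = A / K := by
    intro k
    simp only [habs, hA, ← Finset.sum_div]
  have hAnn : 0 ≤ A := Finset.sum_nonneg fun j _ => by positivity
  constructor
  · have hdouble : (∑ j, ∑ k, ‖τ j k‖ ^ 2) = A := by
      simp only [habs]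
      rw [hA]
      congr 1; ext j
      rw [Finset.sum_const, Finset.card_fin, nsmul_eq_mul]
      field_simp
    rw [hdouble]
    simp_rw [hsum]
    rw [Finset.prod_const, Finset.card_fin, div_pow]
    ring
  · rintro ⟨j, hj⟩
    have hApos : 0 < A := by
      apply Finset.sum_pos' (fun i _ => by positivity) ⟨j, Finset.mem_univ j, ?_⟩
      have : ‖μ j - μ' j‖ > 0 := by
        simpa [sub_eq_zero] using hj
      positivity
    simp_rw [hsum]
    rw [Finset.prod_const]
    positivity
end

section
/- Let K and J be positive integers, H a K × J complex matrix, λ > 0, y ∈ ℂ^K, and D an invertible J × J complex matrix with D^H D = H^H H + λ I_J (where ·^H denotes conjugate transpose). Set r = (H D^{−1})^H y ∈ ℂ^J. Then for every u ∈ ℂ^J, ‖y − H u‖² + λ ‖u‖² = ‖r − D u‖² + ‖y‖² − ‖r‖². In particular, over any set of candidate vectors u, minimizing ‖y − H u‖² + λ u^H u is equivalent to minimizing ‖r − D u‖². -/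
open Finset Matrix

lemma sum_abs_sq_eq_re {n : ℕ} (v : Fin n → ℂ) :
    (∑ j, ‖v j‖ ^ 2) = (star v ⬝ᵥ v).re := by
  rw [dotProduct, Complex.re_sum]
  refine Finset.sum_congr rfl fun j _ => ?_
  simp [Complex.sq_norm, Complex.normSq_apply, Complex.mul_re]

lemma sum_abs_sq_sub_eq_re {n : ℕ} (v w : Fin n → ℂ) :
    (∑ j, ‖v j - w j‖ ^ 2) = (star (v - w) ⬝ᵥ (v - w)).re := by
  simpa [Pi.sub_apply] using sum_abs_sq_eq_re (v - w)

/-- The algebraic identity underlying the generalized sphere decoder: if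
`Dᴴ D = Hᴴ H + λ I` with `D` invertible and `r = (H D⁻¹)ᴴ y`, then for every
`u`, `‖y - H u‖² + λ‖u‖² = ‖r - D u‖² + ‖y‖² - ‖r‖²`; in particular,
minimizing `‖y - H u‖² + λ uᴴu` is equivalent to minimizing `‖r - D u‖²`. -/
theorem stmt_7 (K J : ℕ) (hK : 0 < K) (hJ : 0 < J)
    (H : Matrix (Fin K) (Fin J) ℂ) (lam : ℝ) (hlam : 0 < lam)
    (y : Fin K → ℂ) (D : Matrix (Fin J) (Fin J) ℂ) (hD : IsUnit D)
    (hDD : Dᴴ * D = Hᴴ * H + (lam : ℂ) • (1 : Matrix (Fin J) (Fin J) ℂ))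
    (r : Fin J → ℂ) (hr : r = (H * D⁻¹)ᴴ.mulVec y)
    (u : Fin J → ℂ) :
    (∑ k, ‖y k - H.mulVec u k‖ ^ 2) + lam * ∑ j, ‖u j‖ ^ 2
      = (∑ j, ‖r j - D.mulVec u j‖ ^ 2)
        + (∑ k, ‖y k‖ ^ 2) - ∑ j, ‖r j‖ ^ 2 := by
  have hDet : IsUnit D.det := (Matrix.isUnit_iff_isUnit_det D).mp hD
  -- key norm identity
  have h1 : star (H.mulVec u) ⬝ᵥ (H.mulVec u) + (lam : ℂ) * (star u ⬝ᵥ u)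
      = star (D.mulVec u) ⬝ᵥ (D.mulVec u) := by
    rw [star_mulVec, star_mulVec, Matrix.dotProduct_mulVec,
      Matrix.dotProduct_mulVec, Matrix.vecMul_vecMul, Matrix.vecMul_vecMul, hDD]
    have hsm : star u ᵥ* ((lam : ℂ) • (1 : Matrix (Fin J) (Fin J) ℂ))
        = (lam : ℂ) • star u := by
      ext j
      simp [Matrix.vecMul, dotProduct, Matrix.one_apply, mul_comm]
    rw [Matrix.vecMul_add, add_dotProduct, hsm, smul_dotProduct,
      smul_eq_mul, add_comm]
  -- cross term
  have h2 : star r ⬝ᵥ D.mulVec u = star y ⬝ᵥ H.mulVec u := by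
    subst hr
    rw [star_mulVec, conjTranspose_conjTranspose, Matrix.dotProduct_mulVec,
      Matrix.vecMul_vecMul, Matrix.mul_assoc, Matrix.nonsing_inv_mul D hDet,
      Matrix.mul_one, ← Matrix.dotProduct_mulVec]
  have h3 : star (D.mulVec u) ⬝ᵥ r = star (H.mulVec u) ⬝ᵥ y :=
    calc star (D.mulVec u) ⬝ᵥ r
        = star (star r ⬝ᵥ D.mulVec u) := by
          rw [Matrix.star_dotProduct]
      _ = star (star y ⬝ᵥ H.mulVec u) := by rw [h2]
      _ = star (H.mulVec u) ⬝ᵥ y := by rw [Matrix.star_dotProduct, star_star]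
  have key : star (y - H.mulVec u) ⬝ᵥ (y - H.mulVec u) + (lam : ℂ) * (star u ⬝ᵥ u)
      = star (r - D.mulVec u) ⬝ᵥ (r - D.mulVec u) + star y ⬝ᵥ y - star r ⬝ᵥ r := by
    simp only [star_sub, sub_dotProduct, dotProduct_sub]
    linear_combination h1 + h2 + h3
  have hkey := congrArg Complex.re key
  simp only [Complex.add_re, Complex.sub_re] at hkey
  rw [sum_abs_sq_sub_eq_re, sum_abs_sq_sub_eq_re, sum_abs_sq_eq_re,
    sum_abs_sq_eq_re, sum_abs_sq_eq_re]
  have hre : ((lam : ℂ) * (star u ⬝ᵥ u)).re = lam * (star u ⬝ᵥ u).re := by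
    simp [Complex.mul_re]
  linarith [hkey, hre]
end

section
/- Let s ≥ 1, t ≥ 1, J = 2^s · 3^t, and let j be an integer with 1 ≤ j ≤ J. Set θ_j = exp(iπ(6j − 5)/(3J)) ∈ ℂ. Then θ_j is a primitive 6J-th root of unity, and for every nonzero vector (u_0, u_1, …, u_{J−1}) of Gaussian integers (u_m ∈ ℤ[i], not all zero), ∑_{m=0}^{J−1} u_m θ_j^m ≠ 0; equivalently, 1, θ_j, …, θ_j^{J−1} are linearly independent over ℚ(i). -/
open Finset Polynomial Complex

lemma cyclo6 : cyclotomic 6 ℚ = X ^ 2 - X + 1 := by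
  have h := cyclotomic_expand_eq_cyclotomic_mul (p := 2) (n := 3) Nat.prime_two (by norm_num) ℚ
  rw [cyclotomic_three] at h
  have hne : ((X:ℚ[X])^2 + X + 1) ≠ 0 := fun hc => by
    simpa using congrArg (fun p => Polynomial.coeff p 0) hc
  apply mul_right_cancel₀ hne
  rw [show (3*2 : ℕ) = 6 from rfl] at h
  rw [← h]
  simp only [map_add, map_pow, expand_X, map_one]
  ring

lemma cyclo_six_mul (a b : ℕ) :
    cyclotomic (6 * (2 ^ a * 3 ^ b)) ℚ
      = X ^ (2 * (2 ^ a * 3 ^ b)) - X ^ (2 ^ a * 3 ^ b) + 1 := by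
  have key : ∀ a b : ℕ, cyclotomic (6 * (2 ^ a * 3 ^ b)) ℚ
      = (expand ℚ (2 ^ a * 3 ^ b)) (cyclotomic 6 ℚ) := by
    intro a
    induction a with
    | zero =>
      intro b
      induction b with
      | zero => simp
      | succ b ih =>
        have hdvd : 3 ∣ 6 * (2 ^ 0 * 3 ^ b) := ⟨2 * (2 ^ 0 * 3 ^ b), by ring⟩
        have h := cyclotomic_expand_eq_cyclotomic (p := 3) Nat.prime_three hdvd ℚ
        have harith : 6 * (2 ^ 0 * 3 ^ b) * 3 = 6 * (2 ^ 0 * 3 ^ (b+1)) := by ring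
        rw [harith] at h
        rw [← h, ih, expand_expand]
        have : 3 * (2 ^ 0 * 3 ^ b) = 2 ^ 0 * 3 ^ (b+1) := by ring
        rw [this]
    | succ a ih =>
      intro b
      have hdvd : 2 ∣ 6 * (2 ^ a * 3 ^ b) := ⟨3 * (2 ^ a * 3 ^ b), by ring⟩
      have h := cyclotomic_expand_eq_cyclotomic (p := 2) Nat.prime_two hdvd ℚ
      have harith : 6 * (2 ^ a * 3 ^ b) * 2 = 6 * (2 ^ (a+1) * 3 ^ b) := by ring
      rw [harith] at h
      rw [← h, ih, expand_expand]
      have : 2 * (2 ^ a * 3 ^ b) = 2 ^ (a+1) * 3 ^ b := by ring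
      rw [this]
  rw [key a b, cyclo6]
  simp only [map_add, map_sub, map_pow, expand_X, map_one]
  rw [← pow_mul, mul_comm (2 ^ a * 3 ^ b) 2]

lemma coeffS_eq {J : ℕ} (c : Fin J → ℚ) (o : ℕ) (m0 : Fin J) :
    (∑ m : Fin J, monomial ((m:ℕ)+o) (c m)).coeff ((m0:ℕ)+o) = c m0 := by
  rw [finset_sum_coeff, Finset.sum_eq_single m0]
  · simp [coeff_monomial]
  · intro m _ hne
    rw [coeff_monomial, if_neg]
    intro hc
    exact hne (Fin.ext (by omega))
  · intro h; exact absurd (Finset.mem_univ m0) h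

lemma coeffS_ne {J : ℕ} (c : Fin J → ℚ) (o n : ℕ) (h : ∀ m : Fin J, (m:ℕ) + o ≠ n) :
    (∑ m : Fin J, monomial ((m:ℕ)+o) (c m)).coeff n = 0 := by
  rw [finset_sum_coeff]
  exact Finset.sum_eq_zero fun m _ => by rw [coeff_monomial, if_neg (h m)]

/-- Construction 2: for `J = 2^s · 3^t` and `θ_j = exp(iπ(6j-5)/(3J))`, the
number `θ_j` is a primitive `6J`-th root of unity and `1, θ_j, …, θ_j^(J-1)`
do not admit a nontrivial vanishing combination with Gaussian-integer
coefficients (equivalently, they are linearly independent over `ℚ(i)`). -/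
theorem stmt_9 (s t : ℕ) (hs : 1 ≤ s) (ht : 1 ≤ t) (J : ℕ) (hJ : J = 2 ^ s * 3 ^ t)
    (j : ℕ) (hj1 : 1 ≤ j) (hjJ : j ≤ J)
    (θ : ℂ) (hθ : θ = Complex.exp (Complex.I * Real.pi * (6 * (j : ℂ) - 5) / (3 * (J : ℂ)))) :
    IsPrimitiveRoot θ (6 * J) ∧
    ∀ u : Fin J → GaussianInt, u ≠ 0 →
      (∑ m, GaussianInt.toComplex (u m) * θ ^ (m : ℕ)) ≠ 0 := by
  obtain ⟨s', rfl⟩ : ∃ s', s = s' + 1 := ⟨s - 1, by omega⟩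
  have hJpos : 0 < J := by rw [hJ]; positivity
  have h6Jne : (6 * J) ≠ 0 := by omega
  set k : ℕ := 6 * j - 5 with hk
  have hJC : ((J:ℕ):ℂ) ≠ 0 := by exact_mod_cast hJpos.ne'
  have hcop : Nat.Coprime k (6 * J) := by
    have h2 : ¬ (2 ∣ k) := by omega
    have h3 : ¬ (3 ∣ k) := by omega
    have e : 6 * J = 2 ^ (s' + 2) * 3 ^ (t + 1) := by rw [hJ]; ring
    rw [e]
    exact Nat.Coprime.mul_right
      (((Nat.Prime.coprime_iff_not_dvd Nat.prime_two).2 h2).symm.pow_right _)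
      (((Nat.Prime.coprime_iff_not_dvd Nat.prime_three).2 h3).symm.pow_right _)
  have hθprim : IsPrimitiveRoot θ (6 * J) := by
    have h := Complex.isPrimitiveRoot_exp_of_coprime k (6 * J) h6Jne hcop
    have h5 : 5 ≤ 6 * j := by omega
    have hkC : ((k:ℕ):ℂ) = 6 * (j:ℂ) - 5 := by
      rw [hk, Nat.cast_sub h5]; push_cast; ring
    have hexp : Complex.exp (2 * (Real.pi:ℂ) * I * ((k:ℂ) / ((6 * J : ℕ):ℂ))) = θ := by
      rw [hθ]; congr 1
      rw [hkC]; push_cast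
      field_simp
      ring
    rwa [hexp] at h
  refine ⟨hθprim, ?_⟩
  intro u hu hzero
  apply hu
  set K : ℕ := 2 ^ s' * 3 ^ t with hKdef
  clear_value K
  have hJK : J = 2 * K := by rw [hJ, hKdef]; ring
  have hK1 : 1 ≤ K := by
    rw [hKdef]; exact Nat.one_le_iff_ne_zero.mpr (by positivity)
  -- θ^(3J) = -1
  have hm1 : θ ^ (3 * J) = -1 := by
    have hne1 : θ ^ (3 * J) ≠ 1 :=
      hθprim.pow_ne_one_of_pos_of_lt (by omega) (by omega)
    have hsq : (θ ^ (3 * J)) ^ 2 = 1 := by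
      rw [← pow_mul, show 3 * J * 2 = 6 * J by ring]; exact hθprim.pow_eq_one
    have h0 : (θ ^ (3 * J) - 1) * (θ ^ (3 * J) + 1) = 0 := by linear_combination hsq
    rcases mul_eq_zero.1 h0 with h | h
    · exact absurd (by linear_combination h) hne1
    · linear_combination h
  have hzK : (θ ^ (3 * K)) ^ 2 = -1 := by
    rw [← pow_mul, show 3 * K * 2 = 3 * J by omega]; exact hm1
  obtain ⟨e, he, hIe⟩ : ∃ e : ℚ, (e = 1 ∨ e = -1) ∧ (I:ℂ) = (e:ℚ) * θ ^ (3 * K) := by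
    have h0 : (θ ^ (3 * K) - I) * (θ ^ (3 * K) + I) = 0 := by
      linear_combination hzK - Complex.I_sq
    rcases mul_eq_zero.1 h0 with h | h
    · exact ⟨1, Or.inl rfl, by push_cast; linear_combination -h⟩
    · exact ⟨-1, Or.inr rfl, by push_cast; linear_combination h⟩
  have hene : e ≠ 0 := by rcases he with rfl | rfl <;> norm_num
  -- the polynomial
  set Q : ℚ[X] := (∑ m : Fin J, monomial ((m:ℕ) + 0) (((u m).re : ℚ)))
      + (∑ m : Fin J, monomial ((m:ℕ) + 3 * K) (e * ((u m).im : ℚ))) with hQ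
  clear_value Q
  have haev : (aeval θ) Q = 0 := by
    rw [hQ, map_add, map_sum, map_sum, ← hzero]
    simp only [aeval_monomial, eq_ratCast]
    rw [← Finset.sum_add_distrib]
    apply Finset.sum_congr rfl
    intro m _
    rw [GaussianInt.toComplex_def, hIe]
    push_cast
    ring
  have hmin : minpoly ℚ θ = (X:ℚ[X]) ^ (4 * K) - X ^ (2 * K) + 1 := by
    rw [← cyclotomic_eq_minpoly_rat hθprim (by omega), hJ]
    rw [cyclo_six_mul (s' + 1) t]
    have e1 : 2 * (2 ^ (s' + 1) * 3 ^ t) = 4 * K := by rw [← hJ]; omega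
    have e2 : (2 ^ (s' + 1) * 3 ^ t) = 2 * K := by rw [← hJ]; omega
    rw [e1, e2]
  have hdvd : ((X:ℚ[X]) ^ (4 * K) - X ^ (2 * K) + 1) ∣ Q := by
    rw [← hmin]; exact minpoly.dvd ℚ θ haev
  have hQdeg : Q.natDegree ≤ 5 * K - 1 := by
    rw [hQ]
    refine le_trans (natDegree_add_le _ _) (max_le ?_ ?_) <;>
    · apply natDegree_sum_le_of_forall_le
      intro m _
      refine le_trans (natDegree_monomial_le _) ?_
      have := m.isLt
      omega
  have hQ0 : Q = 0 := by
    by_contra hQne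
    obtain ⟨R, hR⟩ := hdvd
    have hΦne : ((X:ℚ[X]) ^ (4 * K) - X ^ (2 * K) + 1) ≠ 0 := by
      rw [← hmin]; exact minpoly.ne_zero ((hθprim.isIntegral (by omega)).tower_top)
    have hRne : R ≠ 0 := by rintro rfl; rw [mul_zero] at hR; exact hQne hR
    have hΦdeg : ((X:ℚ[X]) ^ (4 * K) - X ^ (2 * K) + 1).natDegree = 4 * K := by
      rw [show ((X:ℚ[X]) ^ (4 * K) - X ^ (2 * K) + 1)
          = X ^ (4 * K) + (1 - X ^ (2 * K)) by ring]
      rw [natDegree_add_eq_left_of_natDegree_lt, natDegree_X_pow]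
      refine lt_of_le_of_lt (natDegree_sub_le _ _) ?_
      rw [natDegree_one, natDegree_X_pow, natDegree_X_pow]
      omega
    have hdeg : Q.natDegree = 4 * K + R.natDegree := by
      rw [hR, natDegree_mul hΦne hRne, hΦdeg]
    have hdR : R.natDegree < K := by omega
    set d := R.natDegree with hd
    have hc1 : Q.coeff (2 * K + d) = - R.coeff d := by
      have h4 : ¬ (4 * K ≤ 2 * K + d) := by omega
      have h2 : 2 * K ≤ 2 * K + d := by omega
      have hsub : 2 * K + d - 2 * K = d := by omega
      have h5 : R.coeff (2 * K + d) = 0 :=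
        coeff_eq_zero_of_natDegree_lt (by omega)
      rw [hR, show ((X:ℚ[X]) ^ (4 * K) - X ^ (2 * K) + 1) * R
          = R * X ^ (4 * K) - R * X ^ (2 * K) + R by ring]
      rw [coeff_add, coeff_sub, coeff_mul_X_pow', coeff_mul_X_pow',
        if_neg h4, if_pos h2, hsub, h5]
      ring
    have hc2 : Q.coeff (2 * K + d) = 0 := by
      rw [hQ, coeff_add, coeffS_ne, coeffS_ne, add_zero]
      · intro m; have := m.isLt; omega
      · intro m; have := m.isLt; omega
    have hlc : R.coeff d ≠ 0 := by
      rw [hd, ← leadingCoeff]; exact leadingCoeff_ne_zero.2 hRne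
    rw [hc2] at hc1
    exact hlc (by linear_combination hc1)
  funext m
  have hre : ((u m).re : ℚ) = 0 := by
    have h1 : Q.coeff ((m:ℕ) + 0) = 0 := by rw [hQ0, coeff_zero]
    rw [hQ, coeff_add, coeffS_eq, coeffS_ne] at h1
    · simpa using h1
    · intro m'; have := m'.isLt; have := m.isLt; omega
  have him : e * ((u m).im : ℚ) = 0 := by
    have h1 : Q.coeff ((m:ℕ) + 3 * K) = 0 := by rw [hQ0, coeff_zero]
    rw [hQ, coeff_add, coeffS_eq, coeffS_ne] at h1
    · simpa using h1
    · intro m'; have := m'.isLt; have := m.isLt; omega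
  have hre' : (u m).re = 0 := by exact_mod_cast hre
  have him' : (u m).im = 0 := by
    rcases mul_eq_zero.1 him with h | h
    · exact absurd h hene
    · exact_mod_cast h
  show u m = 0
  have : u m = ⟨(u m).re, (u m).im⟩ := rfl
  rw [this, hre', him']
  rfl
end

section
/- Let J be an odd positive integer, let j be an integer with 1 ≤ j ≤ J, and set θ_j = 2^{1/(2J)} · exp(iπ(8j − 7)/(4J)) ∈ ℂ. Then θ_j^J = 1 + i, the polynomial x^J − (1 + i) is the minimal polynomial of θ_j over ℚ(i) (so θ_j has degree exactly J over ℚ(i)), and for every nonzero vector (u_0, u_1, …, u_{J−1}) of Gaussian integers (u_m ∈ ℤ[i], not all zero), ∑_{m=0}^{J−1} u_m θ_j^m ≠ 0. -/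
open Finset Polynomial

/-- The field `ℚ(i)` of Gaussian rationals, as an intermediate field of `ℂ`. -/
noncomputable def Qi : IntermediateField ℚ ℂ := IntermediateField.adjoin ℚ {Complex.I}

/-- The element `1 + i` of `ℚ(i)`. -/
noncomputable def oneAddI : Qi :=
  ⟨1 + Complex.I,
    add_mem (one_mem _) (IntermediateField.subset_adjoin ℚ {Complex.I} (Set.mem_singleton _))⟩

/-- The subfield of `ℂ` consisting of `x + y i` with `x, y ∈ ℚ`. -/
noncomputable def QiSub : Subfield ℂ where
  carrier := {z | ∃ x y : ℚ, z = (x : ℂ) + (y : ℂ) * Complex.I}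
  zero_mem' := ⟨0, 0, by simp⟩
  one_mem' := ⟨1, 0, by simp⟩
  add_mem' := by
    rintro a b ⟨x, y, rfl⟩ ⟨x', y', rfl⟩
    exact ⟨x + x', y + y', by push_cast; ring⟩
  mul_mem' := by
    rintro a b ⟨x, y, rfl⟩ ⟨x', y', rfl⟩
    exact ⟨x*x' - y*y', x*y' + y*x', by
      push_cast
      linear_combination ((y : ℂ)*(y' : ℂ)) * Complex.I_sq⟩
  neg_mem' := by
    rintro a ⟨x, y, rfl⟩
    exact ⟨-x, -y, by push_cast; ring⟩
  inv_mem' := by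
    rintro a ⟨x, y, rfl⟩
    by_cases h : (x : ℂ) + (y : ℂ) * Complex.I = 0
    · exact ⟨0, 0, by simp [h]⟩
    · have hn : x^2 + y^2 ≠ 0 := by
        intro h0
        have hx : x = 0 ∧ y = 0 := by
          constructor <;> nlinarith [sq_nonneg x, sq_nonneg y]
        exact h (by simp [hx.1, hx.2])
      have hnC : ((x : ℂ)^2 + (y : ℂ)^2) ≠ 0 := by exact_mod_cast hn
      refine ⟨x/(x^2+y^2), -y/(x^2+y^2), inv_eq_of_mul_eq_one_right ?_⟩
      push_cast
      field_simp
      linear_combination (-(y : ℂ)^2) * Complex.I_sq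

lemma Qi_le : Qi ≤ QiSub.toIntermediateField (fun q => ⟨q, 0, by simp [eq_ratCast]⟩) := by
  rw [Qi, IntermediateField.adjoin_le_iff]
  rintro z rfl
  exact ⟨0, 1, by simp⟩

lemma mem_Qi_exists (b : Qi) : ∃ x y : ℚ, (b : ℂ) = (x : ℂ) + (y : ℂ) * Complex.I :=
  Qi_le b.2

lemma not_pth_power {p : ℕ} (hp : p.Prime) (b : Qi) : b ^ p ≠ oneAddI := by
  intro hb
  obtain ⟨x, y, hxy⟩ := mem_Qi_exists b
  have hC : ((x : ℂ) + (y : ℂ) * Complex.I) ^ p = 1 + Complex.I := by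
    have h1 : ((b ^ p : Qi) : ℂ) = 1 + Complex.I := by rw [hb]; rfl
    push_cast at h1
    rw [hxy] at h1
    exact h1
  have hns : Complex.normSq (((x : ℂ) + (y : ℂ) * Complex.I) ^ p) = 2 := by
    rw [hC]
    have : (1 : ℂ) + Complex.I = (1:ℝ) + (1:ℝ)*Complex.I := by norm_num
    rw [this, Complex.normSq_add_mul_I]; norm_num
  rw [map_pow] at hns
  have hq : ((x^2 + y^2 : ℚ) : ℝ) ^ p = ((2:ℚ) : ℝ) := by
    have : Complex.normSq ((x : ℂ) + (y : ℂ) * Complex.I) = ((x^2 + y^2 : ℚ) : ℝ) := by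
      have := Complex.normSq_add_mul_I (x : ℝ) (y : ℝ)
      push_cast at this ⊢
      convert this using 2 <;> norm_num
    rw [this] at hns
    rw [hns]
    norm_num
  have hq2 : (x^2 + y^2) ^ p = (2 : ℚ) := by exact_mod_cast hq
  have hq0 : x^2 + y^2 ≠ 0 := by
    intro h0; rw [h0] at hq2; simp [zero_pow hp.ne_zero] at hq2
  have hv := padicValRat.pow (p := 2) (x^2 + y^2) (k := p)
  rw [hq2] at hv
  have h2 : padicValRat 2 2 = 1 := by
    simpa using padicValRat.self (p := 2) (by norm_num)
  rw [h2] at hv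
  have hdvd : (p : ℤ) ∣ 1 := Dvd.intro _ hv.symm
  have := Int.le_of_dvd one_pos hdvd
  have := hp.two_le
  omega

lemma theta_pow (J : ℕ) (hJpos : 0 < J) (j : ℕ) (hj1 : 1 ≤ j)
    (θ : ℂ)
    (hθ : θ = (((2 : ℝ) ^ ((1 : ℝ) / (2 * (J : ℝ))) : ℝ) : ℂ)
        * Complex.exp (Complex.I * Real.pi * (8 * (j : ℂ) - 7) / (4 * (J : ℂ)))) :
    θ ^ J = 1 + Complex.I := by
  have hJR : (J : ℝ) ≠ 0 := Nat.cast_ne_zero.mpr hJpos.ne'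
  have hJC : (J : ℂ) ≠ 0 := Nat.cast_ne_zero.mpr hJpos.ne'
  subst hθ
  rw [mul_pow, ← Complex.exp_nat_mul]
  have h1 : ((((2 : ℝ) ^ ((1 : ℝ) / (2 * (J : ℝ))) : ℝ) : ℂ)) ^ J
      = ((Real.sqrt 2 : ℝ) : ℂ) := by
    rw [← Complex.ofReal_pow]
    congr 1
    rw [← Real.rpow_natCast ((2:ℝ) ^ ((1:ℝ)/(2*(J:ℝ)))) J, ← Real.rpow_mul (by norm_num)]
    rw [Real.sqrt_eq_rpow]
    congr 1
    field_simp
  rw [h1]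
  obtain ⟨k, rfl⟩ : ∃ k, j = k + 1 := ⟨j - 1, by omega⟩
  have h2 : (J : ℂ) * (Complex.I * (Real.pi : ℂ) * (8 * ((k + 1 : ℕ) : ℂ) - 7) / (4 * (J : ℂ)))
      = (k : ℂ) * (2 * (Real.pi : ℂ) * Complex.I) + (Real.pi : ℝ) / 4 * Complex.I := by
    push_cast
    field_simp
    ring
  rw [h2, Complex.exp_add]
  have h3 : Complex.exp ((k : ℂ) * (2 * (Real.pi : ℂ) * Complex.I)) = 1 := by
    exact_mod_cast Complex.exp_int_mul_two_pi_mul_I (k : ℤ)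
  rw [h3, one_mul]
  have h4 : ((Real.pi : ℝ) / 4 : ℂ) * Complex.I = ((Real.pi / 4 : ℝ) : ℂ) * Complex.I := by
    push_cast; ring
  rw [h4, Complex.exp_mul_I, ← Complex.ofReal_cos, ← Complex.ofReal_sin,
    Real.cos_pi_div_four, Real.sin_pi_div_four]
  have h5 : Real.sqrt 2 * Real.sqrt 2 = 2 := Real.mul_self_sqrt (by norm_num)
  push_cast
  have h6 : ((Real.sqrt 2 : ℝ) : ℂ) * ((Real.sqrt 2 : ℝ) : ℂ) = 2 := by
    rw [← Complex.ofReal_mul, h5]; norm_num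
  linear_combination (1/2 + Complex.I/2) * h6

/-- Construction 4: for odd `J` and `θ_j = 2^(1/(2J)) exp(iπ(8j-7)/(4J))`,
one has `θ_j^J = 1 + i`, the polynomial `x^J - (1+i)` is the minimal
polynomial of `θ_j` over `ℚ(i)` (so `θ_j` has degree exactly `J` over `ℚ(i)`),
and `1, θ_j, …, θ_j^(J-1)` do not admit a nontrivial vanishing combination
with Gaussian-integer coefficients. -/
theorem stmt_11 (J : ℕ) (hJodd : Odd J) (hJpos : 0 < J)
    (j : ℕ) (hj1 : 1 ≤ j) (hjJ : j ≤ J)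
    (θ : ℂ)
    (hθ : θ = (((2 : ℝ) ^ ((1 : ℝ) / (2 * (J : ℝ))) : ℝ) : ℂ)
        * Complex.exp (Complex.I * Real.pi * (8 * (j : ℂ) - 7) / (4 * (J : ℂ)))) :
    θ ^ J = 1 + Complex.I ∧
    minpoly Qi θ = (X : Polynomial Qi) ^ J - C oneAddI ∧
    (minpoly Qi θ).natDegree = J ∧
    ∀ u : Fin J → GaussianInt, u ≠ 0 →
      (∑ m, GaussianInt.toComplex (u m) * θ ^ (m : ℕ)) ≠ 0 := by
  have hpow : θ ^ J = 1 + Complex.I := theta_pow J hJpos j hj1 θ hθ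
  have irr : Irreducible ((X : Polynomial Qi) ^ J - C oneAddI) :=
    X_pow_sub_C_irreducible_of_odd hJodd (fun p hp _ b => not_pth_power hp b)
  have haeval : Polynomial.aeval θ ((X : Polynomial Qi) ^ J - C oneAddI) = 0 := by
    rw [map_sub, map_pow, Polynomial.aeval_X, Polynomial.aeval_C]
    have : (algebraMap Qi ℂ) oneAddI = 1 + Complex.I := rfl
    rw [this, hpow, sub_self]
  have hmin : minpoly Qi θ = (X : Polynomial Qi) ^ J - C oneAddI :=
    (minpoly.eq_of_irreducible_of_monic irr haeval (monic_X_pow_sub_C _ hJpos.ne')).symm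
  have hdeg : (minpoly Qi θ).degree = J := by
    rw [hmin]; exact Polynomial.degree_X_pow_sub_C hJpos _
  refine ⟨hpow, hmin, ?_, ?_⟩
  · rw [hmin]; exact Polynomial.natDegree_X_pow_sub_C
  · intro u hu hsum
    obtain ⟨m₀, hm₀⟩ := Function.ne_iff.mp hu
    have hI : Complex.I ∈ Qi :=
      IntermediateField.subset_adjoin ℚ {Complex.I} (Set.mem_singleton _)
    have hmem : ∀ z : GaussianInt, GaussianInt.toComplex z ∈ Qi := by
      intro z
      rw [GaussianInt.toComplex_def]
      exact add_mem (intCast_mem Qi _) (mul_mem (intCast_mem Qi _) hI)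
    set uQ : Fin J → Qi := fun m => ⟨GaussianInt.toComplex (u m), hmem (u m)⟩ with huQ
    set P : Polynomial Qi := ∑ m : Fin J, C (uQ m) * X ^ (m : ℕ) with hP
    have hPaev : Polynomial.aeval θ P = 0 := by
      rw [hP, map_sum]
      rw [← hsum]
      refine Finset.sum_congr rfl fun m _ => ?_
      rw [map_mul, map_pow, Polynomial.aeval_X, Polynomial.aeval_C]
      rfl
    have hcoeff : P.coeff (m₀ : ℕ) = uQ m₀ := by
      rw [hP, Polynomial.finset_sum_coeff]
      rw [Finset.sum_eq_single m₀]
      · simp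
      · intro m _ hne
        rw [Polynomial.coeff_C_mul, Polynomial.coeff_X_pow]
        have : ¬ ((m₀ : ℕ) = (m : ℕ)) := fun h => hne (Fin.ext h.symm)
        simp [this]
      · intro h; exact absurd (Finset.mem_univ m₀) h
    have hP0 : P ≠ 0 := by
      intro h0
      apply hm₀
      have : uQ m₀ = 0 := by rw [← hcoeff, h0]; simp
      have hz : GaussianInt.toComplex (u m₀) = 0 := congrArg Subtype.val this
      exact GaussianInt.toComplex_eq_zero.mp hz
    have hdegP : P.degree < (J : WithBot ℕ) := by
      rw [hP]
      refine lt_of_le_of_lt (Polynomial.degree_sum_le _ _) ?_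
      rw [Finset.sup_lt_iff (by exact WithBot.bot_lt_coe J)]
      intro m _
      refine lt_of_le_of_lt (Polynomial.degree_C_mul_X_pow_le _ _) ?_
      exact_mod_cast m.isLt
    have hle := minpoly.degree_le_of_ne_zero Qi θ hP0 hPaev
    rw [hdeg] at hle
    exact absurd (lt_of_le_of_lt hle hdegP) (lt_irrefl _)
end

section
/- For every positive integer J, the polynomial x^J − (1 + i) is irreducible over ℚ(i). -/
open Polynomial

noncomputable def QiSubfield : Subfield ℂ where
  carrier := {z | ∃ a b : ℚ, z = (a : ℂ) + (b : ℂ) * Complex.I}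
  zero_mem' := ⟨0, 0, by simp⟩
  one_mem' := ⟨1, 0, by simp⟩
  add_mem' := by
    rintro x y ⟨a, b, rfl⟩ ⟨c, d, rfl⟩
    exact ⟨a + c, b + d, by push_cast; ring⟩
  neg_mem' := by
    rintro x ⟨a, b, rfl⟩
    exact ⟨-a, -b, by push_cast; ring⟩
  mul_mem' := by
    rintro x y ⟨a, b, rfl⟩ ⟨c, d, rfl⟩
    refine ⟨a * c - b * d, a * d + b * c, ?_⟩
    push_cast
    ring_nf
    rw [Complex.I_sq]
    ring
  inv_mem' := by
    rintro x ⟨a, b, rfl⟩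
    by_cases h : a = 0 ∧ b = 0
    · exact ⟨0, 0, by simp [h.1, h.2]⟩
    · have hd : a ^ 2 + b ^ 2 ≠ 0 := by
        intro hc
        exact h ⟨by nlinarith [sq_nonneg a, sq_nonneg b], by nlinarith [sq_nonneg a, sq_nonneg b]⟩
      have hdC' : ((a : ℂ) ^ 2 + (b : ℂ) ^ 2) ≠ 0 := by exact_mod_cast hd
      refine ⟨a / (a ^ 2 + b ^ 2), -b / (a ^ 2 + b ^ 2), ?_⟩
      have key : ((a : ℂ) + (b : ℂ) * Complex.I) *
          ((a : ℂ) / ((a : ℂ) ^ 2 + (b : ℂ) ^ 2)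
            + (-(b : ℂ) / ((a : ℂ) ^ 2 + (b : ℂ) ^ 2)) * Complex.I) = 1 := by
        field_simp
        ring_nf
        rw [Complex.I_sq]
        ring
      apply inv_eq_of_mul_eq_one_right
      push_cast
      exact key

lemma mem_Qi_form (x : ℂ) (hx : x ∈ Qi) : ∃ a b : ℚ, x = (a : ℂ) + (b : ℂ) * Complex.I := by
  have hle : Qi ≤ QiSubfield.toIntermediateField
      (fun q => ⟨q, 0, by rw [eq_ratCast]; push_cast; ring⟩) := by
    rw [Qi, IntermediateField.adjoin_le_iff]
    rintro z rfl
    exact ⟨0, 1, by push_cast; ring⟩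
  exact hle hx

lemma normSq_rat (x : Qi) : ∃ q : ℚ, (Complex.normSq (x : ℂ) : ℝ) = (q : ℝ) := by
  obtain ⟨a, b, hab⟩ := mem_Qi_form (x : ℂ) x.2
  refine ⟨a ^ 2 + b ^ 2, ?_⟩
  rw [hab]
  simp [Complex.normSq_apply]
  ring

/-- For every positive integer `J`, the polynomial `x^J - (1 + i)` is
irreducible over `ℚ(i)`. -/
theorem stmt_12 (J : ℕ) (hJ : 0 < J) :
    Irreducible ((X : Polynomial Qi) ^ J - C oneAddI) := by
  set p : Polynomial Qi := X ^ J - C oneAddI with hp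
  have hmono : p.Monic := monic_X_pow_sub_C _ hJ.ne'
  have hdeg : p.natDegree = J := natDegree_X_pow_sub_C
  have hne : p ≠ 0 := hmono.ne_zero
  obtain ⟨f, hfm, hfirr, hfd⟩ := p.exists_monic_irreducible_factor
    (not_isUnit_of_natDegree_pos p (by omega))
  -- Map to ℂ
  set φ : Qi →+* ℂ := algebraMap Qi ℂ with hφ
  set F := f.map φ with hF
  have hFm : F.Monic := hfm.map φ
  have hFdvd : F ∣ p.map φ := Polynomial.map_dvd φ hfd
  have hφ1 : φ oneAddI = 1 + Complex.I := rfl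
  have hPm : p.map φ = X ^ J - C (1 + Complex.I) := by
    rw [hp, Polynomial.map_sub, Polynomial.map_pow, map_X, map_C, hφ1]
  have hsplit : F.Splits := IsAlgClosed.splits F
  have hFeq : F = (F.roots.map fun r => X - C r).prod :=
    hsplit.eq_prod_roots_of_monic hFm
  -- each root r satisfies normSq r ^ J = 2
  have hroot : ∀ r ∈ F.roots, Complex.normSq r ^ J = 2 := by
    intro r hr
    have hrF : F.IsRoot r := isRoot_of_mem_roots hr
    obtain ⟨g, hg⟩ := hFdvd
    have hrP : (p.map φ).IsRoot r := by
      rw [hg]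
      simp [Polynomial.IsRoot, hrF.eq_zero]
    rw [hPm] at hrP
    have h1 : r ^ J = 1 + Complex.I := by
      simp [Polynomial.IsRoot, sub_eq_zero] at hrP
      exact hrP
    calc Complex.normSq r ^ J = Complex.normSq (r ^ J) := (map_pow Complex.normSq r J).symm
    _ = Complex.normSq (1 + Complex.I) := by rw [h1]
    _ = 2 := by norm_num [Complex.normSq_apply]
  -- normSq of constant term
  set d := f.natDegree with hd
  have hcard : Multiset.card F.roots = d := by
    have h1 := hsplit.natDegree_eq_card_roots
    rw [← h1, hF, hfm.natDegree_map]
  have hev : Complex.normSq (F.eval 0) ^ J = 2 ^ d := by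
    conv_lhs => rw [hFeq]
    rw [Polynomial.eval_multiset_prod, Multiset.map_map]
    have h2 : Complex.normSq ((F.roots.map fun r => ((X : Polynomial ℂ) - C r).eval 0).prod)
        = (F.roots.map fun r => Complex.normSq r).prod := by
      rw [map_multiset_prod, Multiset.map_map]
      congr 1
      apply Multiset.map_congr rfl
      intro r _
      simp
    simp only [Function.comp_def]
    rw [h2, ← Multiset.prod_map_pow]
    have h3 : (F.roots.map fun r => Complex.normSq r ^ J) = Multiset.replicate d 2 := by
      rw [Multiset.eq_replicate]
      refine ⟨by simp [hcard], ?_⟩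
      intro b hb
      simp only [Multiset.mem_map] at hb
      obtain ⟨r, hr, rfl⟩ := hb
      exact hroot r hr
    rw [h3, Multiset.prod_replicate]
  -- transfer to ℚ
  have hev0 : F.eval 0 = φ (f.eval 0) := Polynomial.eval_zero_map φ f
  obtain ⟨q, hq⟩ := normSq_rat (f.eval 0)
  have hqJ : q ^ J = 2 ^ d := by
    have h4 : (Complex.normSq (φ (f.eval 0)) : ℝ) ^ J = ((2 : ℝ)) ^ d := by
      rw [← hev0]; exact_mod_cast hev
    rw [show (Complex.normSq (φ (f.eval 0)) : ℝ) = (q : ℝ) from hq] at h4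
    exact_mod_cast h4
  -- padic valuation argument
  have hq0 : q ≠ 0 := by
    intro h0
    rw [h0, zero_pow hJ.ne'] at hqJ
    exact (pow_ne_zero d two_ne_zero) hqJ.symm
  have hself : padicValRat 2 (2 : ℚ) = 1 := by
    have h := padicValRat.self (p := 2) (by norm_num)
    simpa using h
  have h2d : padicValRat 2 ((2 : ℚ) ^ d) = d := by
    rw [padicValRat.pow (q := 2), hself]
    ring
  have hval : (J : ℤ) * padicValRat 2 q = (d : ℤ) := by
    rw [← h2d, ← hqJ, padicValRat.pow (q := q)]
  have hd1 : 1 ≤ d := hfirr.natDegree_pos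
  have hdJ : d ≤ J := hdeg ▸ natDegree_le_of_dvd hfd hne
  have hdJ' : d = J := by
    have hv : 1 ≤ padicValRat 2 q := by
      by_contra hv
      push_neg at hv
      have hv0 : padicValRat 2 q ≤ 0 := by omega
      nlinarith [hval, (Int.natCast_pos.mpr hJ : (0:ℤ) < (J:ℤ)), (by exact_mod_cast hd1 : (1:ℤ) ≤ (d:ℤ))]
    have : (J : ℤ) ≤ (d : ℤ) := by nlinarith [hval, (Int.natCast_pos.mpr hJ : (0:ℤ) < (J:ℤ))]
    omega
  -- conclude p = f
  have hfp : f = p := by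
    apply eq_of_dvd_of_natDegree_le_of_leadingCoeff hfd (by omega)
    rw [hfm.leadingCoeff, hmono.leadingCoeff]
  rwa [← hfp]
end
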